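/- arXiv:1010.1746 — 2 statements merged into one kernel-verified Lean document; each statement's English description precedes it below -/
import Mathlib

section
/- In the same two-queue traversal process on a finite rooted tree T with inlinability labels, every node of T except the root is enqueued into the auxiliary queue r exactly once. -/
/-- A finite rooted tree with Boolean inlinability labels; the root is non-inlinable.
    Acyclicity is enforced by a depth function. -/
structure RTree (V : Type) [Fintype V] [DecidableEq V] where
  root : V
  parent : V → Option V
  inlinable : V → Bool
  root_parent : parent root = none
  parent_of_ne : ∀ v, v ≠ root → (parent v).isSome
  depth : V → ℕ
  depth_root : depth root = 0
  depth_parent : ∀ v p, parent v = some p → depth v = depth p + 1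
  root_not_inlinable : inlinable root = false

namespace RTree

/-- Events of the two-queue traversal. -/
inductive Event (V : Type) where
  | deqQ : V → Event V
  | deqR : V → Event V
  | enqQ : V → Event V
  | enqR : V → Event V
  deriving DecidableEq

variable {V : Type} [Fintype V] [DecidableEq V] (T : RTree V)

/-- The children of a node, as a list. -/
noncomputable def children (v : V) : List V :=
  (Finset.univ.filter (fun w => T.parent w = some v)).toList

/-- One run of the two-queue traversal with the given fuel, starting from the state
    `(q, r)`.  Dequeues from the auxiliary queue `r` take priority (the inner loop);
    dequeuing an inlinable node from `r` enqueues its children into `r`, dequeuing a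
    non-inlinable node from `r` enqueues it into `q`; when `r` is empty, a node is
    dequeued from `q` and its children are enqueued into `r`.  Returns the event
    trace together with the final state. -/
noncomputable def run (T : RTree V) : ℕ → List V × List V → List (Event V) × (List V × List V)
  | 0, s => ([], s)
  | fuel+1, (q, f :: r) =>
      if T.inlinable f then
        let res := run T fuel (q, r ++ T.children f)
        (Event.deqR f :: ((T.children f).map Event.enqR ++ res.1), res.2)
      else
        let res := run T fuel (q ++ [f], r)
        (Event.deqR f :: Event.enqQ f :: res.1, res.2)
  | fuel+1, (e :: q, []) =>
      let res := run T fuel (q, T.children e)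
      (Event.deqQ e :: ((T.children e).map Event.enqR ++ res.1), res.2)
  | _+1, ([], []) => ([], ([], []))

/-- `a` is a (proper-or-self) ancestor of `v` after `k` parent steps. -/
def parentIter (T : RTree V) : ℕ → V → Option V
  | 0, v => some v
  | k+1, v => (T.parent v).bind (parentIter T k)

/-- `a` is a strict ancestor of `v`. -/
def StrictAncestor (a v : V) : Prop := ∃ k, 1 ≤ k ∧ T.parentIter k v = some a

end RTree


namespace RTree

/-- Whether an event is a dequeue from the main queue `q`. -/
def Event.isDeqQ {V : Type} : Event V → Bool
  | .deqQ _ => true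
  | _ => false

/-- Whether an event is a dequeue from the auxiliary queue `r`. -/
def Event.isDeqR {V : Type} : Event V → Bool
  | .deqR _ => true
  | _ => false

/-- Whether an event is an enqueue into the auxiliary queue `r`. -/
def Event.isEnqR {V : Type} : Event V → Bool
  | .enqR _ => true
  | _ => false

end RTree

/-!
Two families of counting identities hold along every run. Each queue is conserved:
dequeues plus what remains equal enqueues plus what was there initially. And each
enqueue has a cause: `v` enters `q` exactly when it is dequeued from `r` and is not
inlinable, and `v` enters `r` exactly when its parent `p` is dequeued from `q`, or from
`r` with `p` inlinable. All these identities are additive in the trace, so it suffices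
to check them for a single step. When the run starts from `([root], [])` and ends with
both queues empty, they give `#enqR v = #enqR p + [p = root]` for every `v` with parent
`p`; since the root is never enqueued into `r`, induction down the tree gives
`#enqR v = 1` for `v ≠ root`.
-/

namespace RTree

section Trace

variable {V : Type} [DecidableEq V]

@[simp]
theorem count_map_enqR_enqR (l : List V) (v : V) :
    (l.map Event.enqR).count (Event.enqR v) = l.count v :=
  List.count_map_of_injective _ _ (fun _ _ h => Event.enqR.inj h) v

@[simp]
theorem count_map_enqR_eq_zero (l : List V) {e : Event V} (he : ∀ v, e ≠ Event.enqR v) :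
    (l.map Event.enqR).count e = 0 := by
  simpa [List.count_eq_zero] using fun v _ => (he v).symm

structure QueueBalance (tr : List (Event V)) (s s' : List V × List V) : Prop where
  balance_q : ∀ v, tr.count (.deqQ v) + s'.1.count v = tr.count (.enqQ v) + s.1.count v
  balance_r : ∀ v, tr.count (.deqR v) + s'.2.count v = tr.count (.enqR v) + s.2.count v

theorem QueueBalance.append {tr₁ tr₂ : List (Event V)} {s₁ s₂ s₃ : List V × List V}
    (h₁ : QueueBalance tr₁ s₁ s₂) (h₂ : QueueBalance tr₂ s₂ s₃) :
    QueueBalance (tr₁ ++ tr₂) s₁ s₃ where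
  balance_q v := by
    have := h₁.balance_q v; have := h₂.balance_q v
    simp only [List.count_append]; omega
  balance_r v := by
    have := h₁.balance_r v; have := h₂.balance_r v
    simp only [List.count_append]; omega

end Trace

variable {V : Type} [Fintype V] [DecidableEq V] (T : RTree V)

theorem count_children (u v : V) :
    (T.children u).count v = if T.parent v = some u then 1 else 0 := by
  rw [children, ← Multiset.coe_count, Finset.coe_toList,
    Multiset.count_eq_of_nodup (Finset.nodup _)]
  simp

theorem run_induction (P : List (Event V) → List V × List V → List V × List V → Prop)
    (nil : ∀ s, P [] s s)
    (append : ∀ tr₁ tr₂ s₁ s₂ s₃, P tr₁ s₁ s₂ → P tr₂ s₂ s₃ → P (tr₁ ++ tr₂) s₁ s₃)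
    (deqR_inlinable : ∀ q f r, T.inlinable f →
      P (Event.deqR f :: (T.children f).map Event.enqR) (q, f :: r) (q, r ++ T.children f))
    (deqR_not_inlinable : ∀ q f r, T.inlinable f = false →
      P [Event.deqR f, Event.enqQ f] (q, f :: r) (q ++ [f], r))
    (deqQ : ∀ e q,
      P (Event.deqQ e :: (T.children e).map Event.enqR) (e :: q, []) (q, T.children e)) :
    ∀ fuel s, P (T.run fuel s).1 s (T.run fuel s).2 := by
  intro fuel
  induction fuel with
  | zero => exact nil
  | succ n ih =>
    rintro ⟨q, _ | ⟨f, r⟩⟩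
    · rcases q with _ | ⟨e, q⟩
      · exact nil _
      · exact append _ _ _ _ _ (deqQ e q) (ih _)
    · cases hf : T.inlinable f
      · simpa [run, hf] using append _ _ _ _ _ (deqR_not_inlinable q f r hf) (ih _)
      · simpa [run, hf] using append _ _ _ _ _ (deqR_inlinable q f r hf) (ih _)

structure EnqueuesExplained (tr : List (Event V)) : Prop where
  count_enqQ : ∀ v, tr.count (.enqQ v) = if T.inlinable v then 0 else tr.count (.deqR v)
  count_enqR : ∀ v, tr.count (.enqR v) = (T.parent v).elim 0
    (fun p => tr.count (.deqQ p) + if T.inlinable p then tr.count (.deqR p) else 0)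

variable {T} in
theorem EnqueuesExplained.append {tr₁ tr₂ : List (Event V)}
    (h₁ : T.EnqueuesExplained tr₁) (h₂ : T.EnqueuesExplained tr₂) :
    T.EnqueuesExplained (tr₁ ++ tr₂) where
  count_enqQ v := by
    have := h₁.count_enqQ v; have := h₂.count_enqQ v
    simp only [List.count_append]; split_ifs at * <;> omega
  count_enqR v := by
    simp only [List.count_append, h₁.count_enqR, h₂.count_enqR]
    cases T.parent v with
    | none => rfl
    | some p => simp only [Option.elim]; split_ifs <;> omega

theorem run_queueBalance (fuel : ℕ) (s : List V × List V) :
    QueueBalance (T.run fuel s).1 s (T.run fuel s).2 := by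
  refine T.run_induction (fun tr s s' => QueueBalance tr s s')
    (fun s => ⟨fun _ => rfl, fun _ => rfl⟩) (fun _ _ _ _ _ => QueueBalance.append)
    ?_ ?_ ?_ fuel s <;>
  · intros
    constructor <;> intro v <;> simp [List.count_cons, count_children] <;> omega

theorem run_enqueuesExplained (fuel : ℕ) (s : List V × List V) :
    T.EnqueuesExplained (T.run fuel s).1 := by
  refine T.run_induction (fun tr _ _ => T.EnqueuesExplained tr)
    (fun _ => ⟨fun _ => by simp, fun v => by cases T.parent v <;> simp⟩)
    (fun _ _ _ _ _ => EnqueuesExplained.append) ?_ ?_ ?_ fuel s <;>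
  · intros
    refine ⟨fun v => ?_, fun v => ?_⟩
    · simp [List.count_cons] <;> grind
    · cases hp : T.parent v <;> simp [List.count_cons, count_children, hp]
      grind

theorem parent_induction {motive : V → Prop} (root : motive T.root)
    (step : ∀ v p, T.parent v = some p → motive p → motive v) (v : V) : motive v := by
  induction h : T.depth v generalizing v with
  | zero =>
    by_contra hv
    obtain ⟨p, hp⟩ :=
      Option.isSome_iff_exists.mp (T.parent_of_ne v (by rintro rfl; exact hv root))
    have := T.depth_parent v p hp
    omega
  | succ n ih =>
    have hv : v ≠ T.root := by rintro rfl; simp [T.depth_root] at h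
    obtain ⟨p, hp⟩ := Option.isSome_iff_exists.mp (T.parent_of_ne v hv)
    exact step v p hp (ih p (by have := T.depth_parent v p hp; omega))

theorem count_enqR_eq_of_parent {tr : List (Event V)}
    (hq : QueueBalance tr ([T.root], []) ([], [])) (he : T.EnqueuesExplained tr)
    {v p : V} (hp : T.parent v = some p) :
    tr.count (.enqR v) = tr.count (.enqR p) + if p = T.root then 1 else 0 := by
  have hr := hq.balance_r p
  have hqp := hq.balance_q p
  have hQ := he.count_enqQ p
  rw [he.count_enqR v, hp, Option.elim]
  simp only [List.count_nil, List.count_singleton, beq_iff_eq, eq_comm (a := T.root),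
    add_zero] at hr hqp
  split_ifs at * <;> omega

end RTree

/-- Lemma 4.3: over the entire (terminating) run of the two-queue traversal,
every node of the tree except the root is enqueued into the auxiliary queue `r`
exactly once. -/
theorem xinsert_r_exactly_once
    {V : Type} [Fintype V] [DecidableEq V] (T : RTree V)
    (fuel : ℕ) (tr : List (RTree.Event V))
    (hrun : RTree.run T fuel ([T.root], []) = (tr, ([], []))) :
    ∀ v : V, v ≠ T.root → tr.count (RTree.Event.enqR v) = 1 := by
  have hq := T.run_queueBalance fuel ([T.root], [])
  have he := T.run_enqueuesExplained fuel ([T.root], [])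
  rw [hrun] at hq he
  suffices ∀ v, tr.count (.enqR v) = if v = T.root then 0 else 1 by
    intro v hv
    simpa [hv] using this v
  refine T.parent_induction (by simp [he.count_enqR, T.root_parent]) fun v p hp ih => ?_
  have hv : v ≠ T.root := by rintro rfl; simp [T.root_parent] at hp
  rw [T.count_enqR_eq_of_parent hq he hp, ih, if_neg hv]
  split_ifs <;> rfl
end

section
/- For any node f dequeued from the auxiliary queue r during the two-queue traversal triggered by dequeuing a non-inlinable node e from q, exactly one of the following holds: (1) f is a child of e, or (2) f's nearest non-inlinable strict ancestor is e and f's parent is inlinable (i.e., every strict ancestor of f below e is inlinable). In particular, every node enqueued into r during the processing of e is a descendant of e. -/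
/-! Call `f` inline-reachable from `e` when `e` is a strict ancestor of `f` and every node
strictly between them is inlinable. While `e` is being processed, every node in `r` is
inline-reachable from `e`: the children of `e` are, and so are the children of an inlinable
node that is. For a non-inlinable `e` this is exactly the dichotomy of the theorem, and `e` is
non-inlinable because `q` only ever holds the root and nodes moved there for being
non-inlinable. -/

namespace RTree

section Traces

variable {V : Type}

def OccursBeforeDeqQ (tr : List (Event V)) (x : Event V) : Prop :=
  ∃ j : ℕ, tr[j]? = some x ∧ ∀ k : ℕ, k < j → ∀ e', tr[k]? ≠ some (Event.deqQ e')

def OccursDuring (tr : List (Event V)) (e : V) (x : Event V) : Prop :=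
  ∃ i j : ℕ, i < j ∧ tr[i]? = some (Event.deqQ e) ∧ tr[j]? = some x ∧
    ∀ k : ℕ, i < k → k < j → ∀ e', tr[k]? ≠ some (Event.deqQ e')

lemma OccursBeforeDeqQ.of_cons {y x : Event V} {tr : List (Event V)}
    (h : OccursBeforeDeqQ (y :: tr) x) :
    x = y ∨ (∀ e', y ≠ Event.deqQ e') ∧ OccursBeforeDeqQ tr x := by
  obtain ⟨_ | j, hj, hk⟩ := h
  · exact Or.inl (Option.some_injective _ hj).symm
  · exact Or.inr ⟨fun e' hy => hk 0 (by omega) e' (by simp [hy]),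
      j, hj, fun k hkj e' => hk (k + 1) (by omega) e'⟩

lemma OccursDuring.of_cons {y x : Event V} {tr : List (Event V)} {e : V}
    (h : OccursDuring (y :: tr) e x) :
    y = Event.deqQ e ∧ OccursBeforeDeqQ tr x ∨ OccursDuring tr e x := by
  obtain ⟨_ | i, _ | j, hij, hi, hj, hk⟩ := h
  · omega
  · exact Or.inl ⟨Option.some_injective _ hi,
      j, hj, fun k hkj e' => hk (k + 1) (by omega) (by omega) e'⟩
  · omega
  · exact Or.inr ⟨i, j, by omega, hi, hj,
      fun k hik hkj e' => hk (k + 1) (by omega) (by omega) e'⟩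

end Traces

variable {V : Type} [Fintype V] [DecidableEq V] {T : RTree V}

lemma depth_eq_of_parentIter_eq_some {k : ℕ} {v a : V} (h : T.parentIter k v = some a) :
    T.depth v = T.depth a + k := by
  induction k generalizing v with
  | zero => simp_all [parentIter]
  | succ k ih =>
    obtain ⟨p, hp, hpa⟩ := Option.bind_eq_some_iff.1 h
    rw [T.depth_parent v p hp, ih hpa]
    omega

lemma StrictAncestor.depth_lt {a v : V} (h : T.StrictAncestor a v) : T.depth a < T.depth v := by
  obtain ⟨k, hk, hka⟩ := h
  have := depth_eq_of_parentIter_eq_some hka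
  omega

lemma strictAncestor_iff {a v : V} :
    T.StrictAncestor a v ↔ ∃ p, T.parent v = some p ∧ (a = p ∨ T.StrictAncestor a p) := by
  constructor
  · rintro ⟨_ | k, hk, hka⟩
    · omega
    obtain ⟨p, hp, hpa⟩ := Option.bind_eq_some_iff.1 hka
    refine ⟨p, hp, ?_⟩
    rcases k with _ | k
    · exact Or.inl (Option.some_injective _ hpa).symm
    · exact Or.inr ⟨k + 1, by omega, hpa⟩
  · rintro ⟨p, hp, rfl | ⟨k, -, hka⟩⟩
    · exact ⟨1, le_rfl, by simp [parentIter, hp]⟩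
    · exact ⟨k + 1, by omega, by simp [parentIter, hp, hka]⟩

lemma strictAncestor_of_parent_eq_some {a v : V} (h : T.parent v = some a) :
    T.StrictAncestor a v :=
  strictAncestor_iff.2 ⟨a, h, Or.inl rfl⟩

def InlineReachable (T : RTree V) (e f : V) : Prop :=
  T.StrictAncestor e f ∧
    ∀ a, T.StrictAncestor a f → T.StrictAncestor e a → T.inlinable a = true

lemma inlineReachable_of_parent_eq_some {e g : V} (h : T.parent g = some e) :
    T.InlineReachable e g := by
  refine ⟨strictAncestor_of_parent_eq_some h, fun a ha hea => ?_⟩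
  obtain ⟨p, hp, hap⟩ := strictAncestor_iff.1 ha
  obtain rfl : e = p := Option.some_injective _ (h.symm.trans hp)
  rcases hap with rfl | hap
  · exact absurd hea.depth_lt (lt_irrefl _)
  · exact absurd (hap.depth_lt.trans hea.depth_lt) (lt_irrefl _)

lemma InlineReachable.of_parent_eq_some {e f g : V} (hf : T.InlineReachable e f)
    (hfl : T.inlinable f = true) (h : T.parent g = some f) : T.InlineReachable e g := by
  refine ⟨strictAncestor_iff.2 ⟨f, h, Or.inr hf.1⟩, fun a ha hea => ?_⟩
  obtain ⟨p, hp, hap⟩ := strictAncestor_iff.1 ha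
  obtain rfl : f = p := Option.some_injective _ (h.symm.trans hp)
  rcases hap with rfl | hap
  · exact hfl
  · exact hf.2 a hap hea

lemma InlineReachable.xor {e f : V} (hf : T.InlineReachable e f) (he : T.inlinable e = false) :
    Xor (T.parent f = some e)
      ((∃ p : V, T.parent f = some p ∧ T.inlinable p = true) ∧ T.InlineReachable e f) := by
  by_cases hpe : T.parent f = some e
  · refine Or.inl ⟨hpe, ?_⟩
    rintro ⟨⟨p, hp, hpl⟩, -⟩
    obtain rfl : e = p := Option.some_injective _ (hpe.symm.trans hp)
    simp [he] at hpl
  · refine Or.inr ⟨⟨?_, hf⟩, hpe⟩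
    obtain ⟨p, hp, rfl | hap⟩ := strictAncestor_iff.1 hf.1
    · exact absurd hp hpe
    · exact ⟨p, hp, hf.2 p (strictAncestor_of_parent_eq_some hp) hap⟩

lemma mem_children {v w : V} (h : w ∈ T.children v) : T.parent w = some v := by
  simpa [children] using h

def InlineReachableEvent (T : RTree V) (e : V) : Event V → Prop
  | .deqR f | .enqR f => T.InlineReachable e f
  | _ => True

/-- Invariant of a trace produced while `e` is being processed. -/
def Anchored (T : RTree V) (e : V) (tr : List (Event V)) : Prop :=
  (∀ x, OccursBeforeDeqQ tr x → T.InlineReachableEvent e x) ∧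
    ∀ e' x, OccursDuring tr e' x → T.inlinable e' = false ∧ T.InlineReachableEvent e' x

lemma anchored_nil (e : V) : T.Anchored e [] :=
  ⟨fun _ ⟨_, hj, _⟩ => by simp at hj, fun _ _ ⟨_, _, _, hi, _⟩ => by simp at hi⟩

lemma Anchored.cons {e : V} {y : Event V} {tr : List (Event V)} (h : T.Anchored e tr)
    (hy : T.InlineReachableEvent e y) (hyq : ∀ e', y ≠ Event.deqQ e') :
    T.Anchored e (y :: tr) := by
  refine ⟨fun x hx => ?_, fun e' x hx => ?_⟩
  · rcases hx.of_cons with rfl | ⟨-, hx⟩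
    · exact hy
    · exact h.1 x hx
  · rcases hx.of_cons with ⟨rfl, -⟩ | hx
    · exact absurd rfl (hyq e')
    · exact h.2 e' x hx

lemma Anchored.deqQ_cons {e e' : V} {tr : List (Event V)} (h : T.Anchored e' tr)
    (he' : T.inlinable e' = false) : T.Anchored e (Event.deqQ e' :: tr) := by
  refine ⟨fun x hx => ?_, fun e'' x hx => ?_⟩
  · rcases hx.of_cons with rfl | ⟨hne, -⟩
    · trivial
    · exact absurd rfl (hne e')
  · rcases hx.of_cons with ⟨heq, hx'⟩ | hx'
    · obtain rfl := Event.deqQ.inj heq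
      exact ⟨he', h.1 x hx'⟩
    · exact h.2 e'' x hx'

lemma Anchored.enqR_append {e : V} {l : List V} {tr : List (Event V)} (h : T.Anchored e tr)
    (hl : ∀ f ∈ l, T.InlineReachable e f) : T.Anchored e (l.map Event.enqR ++ tr) := by
  induction l with
  | nil => exact h
  | cons f l ih =>
    exact (ih fun g hg => hl g (List.mem_cons_of_mem _ hg)).cons (hl f List.mem_cons_self)
      (by simp)

lemma anchored_run (n : ℕ) {q r : List V} {e : V} (hq : ∀ x ∈ q, T.inlinable x = false)
    (hr : ∀ f ∈ r, T.InlineReachable e f) : T.Anchored e (T.run n (q, r)).1 := by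
  induction n generalizing q r e with
  | zero => exact anchored_nil e
  | succ n ih =>
    rcases r with _ | ⟨f, r⟩
    · rcases q with _ | ⟨e', q⟩
      · exact anchored_nil e
      have hch : ∀ g ∈ T.children e', T.InlineReachable e' g :=
        fun g hg => inlineReachable_of_parent_eq_some (mem_children hg)
      exact ((ih (fun x hx => hq x (List.mem_cons_of_mem _ hx)) hch).enqR_append hch).deqQ_cons
        (hq e' List.mem_cons_self)
    have hf := hr f List.mem_cons_self
    have hr' : ∀ g ∈ r, T.InlineReachable e g := fun g hg => hr g (List.mem_cons_of_mem _ hg)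
    by_cases hinl : T.inlinable f
    · have hch : ∀ g ∈ T.children f, T.InlineReachable e g :=
        fun g hg => hf.of_parent_eq_some hinl (mem_children hg)
      have hrch : ∀ g ∈ r ++ T.children f, T.InlineReachable e g := by
        simpa only [List.mem_append, or_imp, forall_and] using And.intro hr' hch
      simp only [run, hinl, if_true]
      exact ((ih hq hrch).enqR_append hch).cons hf (by simp)
    · have hq' : ∀ x ∈ q ++ [f], T.inlinable x = false := by
        simpa [or_imp, forall_and, hinl] using hq
      simp only [run, hinl, Bool.false_eq_true, if_false]
      exact ((ih hq' hr').cons (y := .enqQ f) trivial (by simp)).cons hf (by simp)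

end RTree

/-- During the processing of a non-inlinable node `e` (the segment of the trace
after `deqQ e` and before the next dequeue from `q`), every node `f` dequeued from
`r` satisfies exactly one of: (1) `f` is a child of `e`; (2) `f`'s parent is
inlinable and `e` is `f`'s nearest non-inlinable strict ancestor (every strict
ancestor of `f` strictly below `e` is inlinable).  Moreover every node enqueued
into `r` during the processing of `e` is a strict descendant of `e`. -/
theorem xinsert_inner_loop_descendants
    {V : Type} [Fintype V] [DecidableEq V] (T : RTree V)
    (fuel : ℕ) (tr : List (RTree.Event V))
    (hrun : RTree.run T fuel ([T.root], []) = (tr, ([], []))) :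
    (∀ e f : V, ∀ i j : ℕ, i < j →
      tr[i]? = some (RTree.Event.deqQ e) →
      tr[j]? = some (RTree.Event.deqR f) →
      (∀ k : ℕ, i < k → k < j → ∀ e' : V, tr[k]? ≠ some (RTree.Event.deqQ e')) →
      Xor' (T.parent f = some e)
        ((∃ p : V, T.parent f = some p ∧ T.inlinable p = true) ∧
          T.StrictAncestor e f ∧
          ∀ a : V, T.StrictAncestor a f → T.StrictAncestor e a →
            T.inlinable a = true)) ∧
    (∀ e f : V, ∀ i j : ℕ, i < j →
      tr[i]? = some (RTree.Event.deqQ e) →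
      tr[j]? = some (RTree.Event.enqR f) →
      (∀ k : ℕ, i < k → k < j → ∀ e' : V, tr[k]? ≠ some (RTree.Event.deqQ e')) →
      T.StrictAncestor e f) := by
  have hA := RTree.anchored_run (T := T) fuel (q := [T.root]) (r := []) (e := T.root)
    (by simpa using T.root_not_inlinable) (by simp)
  rw [hrun] at hA
  refine ⟨fun e f i j hij hi hj hk => ?_, fun e f i j hij hi hj hk => ?_⟩
  · obtain ⟨he, hf⟩ := hA.2 e (.deqR f) ⟨i, j, hij, hi, hj, hk⟩
    exact RTree.InlineReachable.xor hf he
  · exact (hA.2 e (.enqR f) ⟨i, j, hij, hi, hj, hk⟩).2.1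
end
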